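/- Let {a_k}_{k=-∞}^{∞} be a complex sequence and define b_k = a_k for k ≠ 0 and b_0 = a_0/2. Then for every integer r ≥ 0, the average b̃_{2^r} := sup over intervals w ⊂ ℤ with |w| ≥ 2^r of (1/|w|)|∑_{m∈w} b_m| satisfies b̃_{2^r} ≤ 6·ã_{2^r}, where ã_{2^r} is the analogous average for {a_k}. -/

import Mathlib

open scoped ENNReal BigOperators

/-! Let `N = n - 1`, so every window of length `≥ n` has length `≥ N + 1`. By
inclusion–exclusion over the windows `[-N, 0]`, `[0, N]` and `[-N, N]`, `a₀` is a signed sum of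
three window sums, so `|a₀| ≤ (4N + 3) ã_n`. Halving `a₀` moves a window sum by at most
`|a₀| / 2 ≤ 2 |w| ã_n`, hence in fact `b̃_n ≤ 3 ã_n`. -/

/-- The average `c̃_n` of a two-sided complex sequence: the supremum over all
intervals `w ⊂ ℤ` of cardinality `≥ n` of `(1/|w|)·|∑_{m∈w} c_m|`. -/
noncomputable def seqAvg (a : ℤ → ℂ) (n : ℕ) : ℝ≥0∞ :=
  ⨆ (l : ℤ) (m : ℕ) (_ : n ≤ m + 1),
    ENNReal.ofReal (‖∑ j ∈ Finset.Icc l (l + (m : ℤ)), a j‖ / (m + 1))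

open Finset

lemma norm_sum_Icc_le_of_seqAvg_ne_top (a : ℤ → ℂ) {n : ℕ} (hA : seqAvg a n ≠ ⊤)
    (l : ℤ) {m : ℕ} (hm : n ≤ m + 1) :
    ‖∑ j ∈ Icc l (l + m), a j‖ ≤ (m + 1) * (seqAvg a n).toReal := by
  have h : ENNReal.ofReal (‖∑ j ∈ Icc l (l + m), a j‖ / (m + 1)) ≤ seqAvg a n :=
    le_iSup_of_le l (le_iSup_of_le m (le_iSup_of_le hm le_rfl))
  rwa [ENNReal.ofReal_le_iff_le_toReal hA, div_le_iff₀' (by positivity)] at h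

lemma seqAvg_le_ofReal {a : ℤ → ℂ} {n : ℕ} {C : ℝ}
    (h : ∀ (l : ℤ) (m : ℕ), n ≤ m + 1 → ‖∑ j ∈ Icc l (l + m), a j‖ ≤ (m + 1) * C) :
    seqAvg a n ≤ ENNReal.ofReal C :=
  iSup₂_le fun l m => iSup_le fun hm =>
    ENNReal.ofReal_le_ofReal <| (div_le_iff₀' (by positivity)).2 (h l m hm)

lemma apply_zero_eq_sum_Icc (a : ℤ → ℂ) (N : ℕ) :
    a 0 = ∑ j ∈ Icc (-N : ℤ) 0, a j + ∑ j ∈ Icc 0 (N : ℤ), a j - ∑ j ∈ Icc (-N : ℤ) N, a j := by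
  have hunion : Icc (-N : ℤ) 0 ∪ Icc 0 (N : ℤ) = Icc (-N : ℤ) N := by
    ext; simp only [mem_union, mem_Icc]; omega
  have hinter : Icc (-N : ℤ) 0 ∩ Icc 0 (N : ℤ) = {0} := by
    ext; simp only [mem_inter, mem_Icc, mem_singleton]; omega
  rw [← sum_union_inter, hunion, hinter, sum_singleton]
  ring

lemma norm_apply_zero_le_of_window_bound {a : ℤ → ℂ} {n N : ℕ} {C : ℝ} (hN : n ≤ N + 1)
    (h : ∀ (l : ℤ) (m : ℕ), n ≤ m + 1 → ‖∑ j ∈ Icc l (l + m), a j‖ ≤ (m + 1) * C) :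
    ‖a 0‖ ≤ (4 * N + 3) * C := by
  have hleft : ‖∑ j ∈ Icc (-N : ℤ) 0, a j‖ ≤ (N + 1) * C := by
    simpa using h (-N) N hN
  have hright : ‖∑ j ∈ Icc 0 (N : ℤ), a j‖ ≤ (N + 1) * C := by
    simpa using h 0 N hN
  have hboth : ‖∑ j ∈ Icc (-N : ℤ) N, a j‖ ≤ (2 * N + 1) * C := by
    have := h (-N) (2 * N) (by omega)
    rwa [show (-N : ℤ) + (2 * N : ℕ) = N by push_cast; ring, Nat.cast_mul, Nat.cast_two] at this
  rw [apply_zero_eq_sum_Icc a N]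
  calc _ ≤ ‖∑ j ∈ Icc (-N : ℤ) 0, a j‖ + ‖∑ j ∈ Icc 0 (N : ℤ), a j‖
        + ‖∑ j ∈ Icc (-N : ℤ) N, a j‖ := norm_sub_le_of_le (norm_add_le _ _) le_rfl
    _ ≤ (N + 1) * C + (N + 1) * C + (2 * N + 1) * C := by gcongr
    _ = (4 * N + 3) * C := by ring

lemma norm_sum_le_of_halve_zero {a b : ℤ → ℂ} (hb : ∀ k : ℤ, k ≠ 0 → b k = a k)
    (hb0 : b 0 = a 0 / 2) (s : Finset ℤ) :
    ‖∑ j ∈ s, b j‖ ≤ ‖∑ j ∈ s, a j‖ + ‖a 0‖ / 2 := by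
  have hdiff : ∀ j, b j - a j = if j = 0 then -(a 0 / 2) else 0 := by
    intro j
    split_ifs with hj
    · rw [hj, hb0]; ring
    · rw [hb j hj, sub_self]
  have hsum : ∑ j ∈ s, b j = ∑ j ∈ s, a j + if (0 : ℤ) ∈ s then -(a 0 / 2) else 0 := by
    rw [← sum_ite_eq' s 0 fun _ => -(a 0 / 2), ← sum_add_distrib]
    exact sum_congr rfl fun j _ => by rw [← hdiff]; ring
  rw [hsum]
  refine (norm_add_le _ _).trans (add_le_add_right ?_ _)
  split_ifs <;> simp [div_nonneg]

theorem seqAvg_halve_zero_le (a b : ℤ → ℂ) (hb : ∀ k : ℤ, k ≠ 0 → b k = a k)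
    (hb0 : b 0 = a 0 / 2) (n : ℕ) :
    seqAvg b n ≤ 3 * seqAvg a n := by
  by_cases hA : seqAvg a n = ⊤
  · simp [hA]
  set C := (seqAvg a n).toReal
  have hC : 0 ≤ C := ENNReal.toReal_nonneg
  have hwindow := fun l (m : ℕ) (hm : n ≤ m + 1) => norm_sum_Icc_le_of_seqAvg_ne_top a hA l hm
  have hzero := norm_apply_zero_le_of_window_bound (N := n - 1) (by omega) hwindow
  calc seqAvg b n ≤ ENNReal.ofReal (3 * C) := seqAvg_le_ofReal fun l m hm => ?_
    _ = 3 * seqAvg a n := by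
      rw [ENNReal.ofReal_mul (by norm_num), ENNReal.ofReal_toReal hA]; norm_num
  have hNm : ((n - 1 : ℕ) : ℝ) ≤ m := by exact_mod_cast (by omega : n - 1 ≤ m)
  calc ‖∑ j ∈ Icc l (l + m), b j‖ ≤ ‖∑ j ∈ Icc l (l + m), a j‖ + ‖a 0‖ / 2 :=
        norm_sum_le_of_halve_zero hb hb0 _
    _ ≤ (m + 1) * C + (4 * (n - 1 : ℕ) + 3) * C / 2 := by gcongr; exact hwindow l m hm
    _ ≤ (m + 1) * (3 * C) := by nlinarith

theorem avg_zero_modification_general (a b : ℤ → ℂ)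
    (hb : ∀ k : ℤ, k ≠ 0 → b k = a k) (hb0 : b 0 = a 0 / 2) (r : ℕ) :
    seqAvg b (2 ^ r) ≤ 6 * seqAvg a (2 ^ r) :=
  (seqAvg_halve_zero_le a b hb hb0 _).trans (by gcongr; norm_num)

/-- If `b` is obtained from `a` by halving the term at index `0`, then
`b̃_{2^r} ≤ 6 · ã_{2^r}` for every `r ≥ 0` (assuming `ã₁ < ∞`). -/
theorem avg_zero_modification (a b : ℤ → ℂ) (h : seqAvg a 1 ≠ ⊤)
    (hb : ∀ k : ℤ, k ≠ 0 → b k = a k) (hb0 : b 0 = a 0 / 2) (r : ℕ) :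
    seqAvg b (2 ^ r) ≤ 6 * seqAvg a (2 ^ r) :=
  avg_zero_modification_general a b hb hb0 r
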